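/- arXiv:1203.6051 — 2 statements merged into one kernel-verified Lean document; each statement's English description precedes it below -/
import Mathlib

section
/- Let d ≥ 2 and 0 < p ≤ p' < 1. Under the standard monotone coupling of bond percolation with parameters p and p', almost surely limsup_{N→∞} (Z_N(ω_p))^{1/N} / p ≤ limsup_{N→∞} (Z_N(ω_{p'}))^{1/N} / p'. (This expresses that the ratio between the quenched and annealed connective constants is non-decreasing in p.) -/
open MeasureTheory ProbabilityTheory Filter

namespace SAW

abbrev V (d : ℕ) := Fin d → ℤ
abbrev Edge (d : ℕ) := (Fin d → ℤ) × Fin d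

/-- The `i`-th unit vector of `ℤ^d`. -/
def unit (d : ℕ) (i : Fin d) : V d := fun j => if j = i then 1 else 0

/-- Nearest-neighbour adjacency on `ℤ^d`. -/
def Adj {d : ℕ} (x y : V d) : Prop :=
  ∃ i : Fin d, y = x + unit d i ∨ x = y + unit d i

/-- Self-avoiding nearest-neighbour path of length `N` in `ℤ^d`. -/
def IsSAW {d N : ℕ} (S : Fin (N + 1) → V d) : Prop :=
  Function.Injective S ∧ ∀ n : Fin N, Adj (S n.castSucc) (S n.succ)

/-- The path `S` uses the edge `e` (the edge `e = (v, i)` joins `v` and `v + unit d i`). -/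
def UsesEdge {d N : ℕ} (S : Fin (N + 1) → V d) (e : Edge d) : Prop :=
  ∃ n : Fin N,
    (S n.castSucc = e.1 ∧ S n.succ = e.1 + unit d e.2) ∨
    (S n.succ = e.1 ∧ S n.castSucc = e.1 + unit d e.2)

/-- The path `S` is open for the environment `η` (`η e` means that the edge `e` is open). -/
def OpenPath {d N : ℕ} (η : Edge d → Prop) (S : Fin (N + 1) → V d) : Prop :=
  ∀ e : Edge d, UsesEdge S e → η e

/-- `s_N` : the number of self-avoiding paths of length `N` starting at the origin. -/
noncomputable def sCount (d N : ℕ) : ℕ :=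
  Nat.card {S : Fin (N + 1) → V d // IsSAW S ∧ S 0 = 0}

/-- `Z_N(x)` : the number of open self-avoiding paths of length `N` starting at `x`. -/
noncomputable def Z {d : ℕ} (η : Edge d → Prop) (N : ℕ) (x : V d) : ℕ :=
  Nat.card {S : Fin (N + 1) → V d // IsSAW S ∧ S 0 = x ∧ OpenPath η S}

end SAW

/-!
Given `ω_{p'}`, the configuration `ω_p` keeps each `ω_{p'}`-open edge independently with
probability `p / p'`. Hence, for a self-avoiding path `γ` with `N` edges and any functional `F`,
`E[1{γ is p-open} F(ω_{p'})] = (p / p')^N E[1{γ is p'-open} F(ω_{p'})]`: on either event `F` only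
sees `ω_{p'}` off `γ`, which is independent of the edges of `γ`. Taking `F = 1 / Z_N(ω_{p'})` and
summing over `γ` gives `E[Z_N(ω_p) / Z_N(ω_{p'})] ≤ (p / p')^N`. Markov's inequality and
Borel–Cantelli then show that for every `c > p / p'`, almost surely
`Z_N(ω_p) ≤ c^N Z_N(ω_{p'})` for all large `N`; taking `N`-th roots (the bound `Z_N ≤ (2d)^N`
keeps the limsups finite) gives the claim.
-/

open Finset
open scoped ENNReal Topology

section Thinning

variable {ι Ω : Type*} {X : Ω → ι → ℝ}

lemma measurableSet_forall_le (E : Finset ι) (s : ℝ) :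
    MeasurableSet[⨆ i ∈ (E : Set ι), MeasurableSpace.comap (fun a => X a i) inferInstance]
      {a | ∀ i ∈ E, X a i ≤ s} := by
  simp only [← Set.iInter_ofPred]
  exact E.measurableSet_biInter fun i hi =>
    le_iSup₂ (f := fun i (_ : i ∈ (E : Set ι)) => MeasurableSpace.comap (fun a => X a i) _) i hi _
      ⟨Set.Iic s, measurableSet_Iic, rfl⟩

lemma measurable_mem_or_le (E : Finset ι) (r : ℝ) :
    Measurable[⨆ i ∈ (↑E : Set ι)ᶜ, MeasurableSpace.comap (fun a => X a i) inferInstance]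
      fun a i => i ∈ E ∨ X a i ≤ r := by
  let _ : MeasurableSpace Ω :=
    ⨆ i ∈ (↑E : Set ι)ᶜ, MeasurableSpace.comap (fun a => X a i) inferInstance
  refine measurable_pi_iff.2 fun i => ?_
  by_cases hi : i ∈ E
  · simp only [hi, true_or]
    exact measurable_const
  · simp only [hi, false_or]
    exact measurableSet_setOfPred.1 <|
      le_iSup₂ (f := fun i (_ : i ∈ (↑E : Set ι)ᶜ) => MeasurableSpace.comap (fun a => X a i) _)
        i hi _ ⟨Set.Iic r, measurableSet_Iic, rfl⟩

variable [MeasurableSpace Ω] {μ : Measure Ω}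

lemma measure_setOf_le_eq_ofReal {i : ι} (hmeas : Measurable fun a => X a i)
    (hunif : Measure.map (fun a => X a i) μ = volume.restrict (Set.Icc (0 : ℝ) 1))
    {s : ℝ} (hs1 : s ≤ 1) : μ {a | X a i ≤ s} = ENNReal.ofReal s := by
  change μ ((fun a => X a i) ⁻¹' Set.Iic s) = _
  have hIcc : Set.Iic s ∩ Set.Icc 0 1 = Set.Icc 0 s := by
    ext t
    simp only [Set.mem_inter_iff, Set.mem_Iic, Set.mem_Icc]
    exact ⟨fun h => ⟨h.2.1, h.1⟩, fun h => ⟨h.2, h.1, h.2.trans hs1⟩⟩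
  rw [← Measure.map_apply hmeas measurableSet_Iic, hunif, Measure.restrict_apply measurableSet_Iic,
    hIcc, Real.volume_Icc, sub_zero]

lemma measure_setOf_forall_le (hmeas : ∀ i, Measurable fun a => X a i)
    (hunif : ∀ i, Measure.map (fun a => X a i) μ = volume.restrict (Set.Icc (0 : ℝ) 1))
    (hindep : iIndepFun (fun i a => X a i) μ) (E : Finset ι) {s : ℝ} (hs1 : s ≤ 1) :
    μ {a | ∀ i ∈ E, X a i ≤ s} = ENNReal.ofReal s ^ #E := by
  have h := hindep.meas_biInter (S := E) (s := fun i => {a | X a i ≤ s})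
    fun i _ => ⟨Set.Iic s, measurableSet_Iic, rfl⟩
  simp only [Set.iInter_ofPred] at h
  rw [h, prod_congr rfl fun i _ => measure_setOf_le_eq_ofReal (hmeas i) (hunif i) hs1,
    prod_const]

lemma lintegral_indicator_forall_le (hmeas : ∀ i, Measurable fun a => X a i)
    (hindep : iIndepFun (fun i a => X a i) μ) (E : Finset ι) (s : ℝ) {H : Ω → ℝ≥0∞}
    (hH : Measurable[⨆ i ∈ (↑E : Set ι)ᶜ, MeasurableSpace.comap (fun a => X a i) inferInstance] H) :
    ∫⁻ a, {a | ∀ i ∈ E, X a i ≤ s}.indicator H a ∂μ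
      = μ {a | ∀ i ∈ E, X a i ≤ s} * ∫⁻ a, H a ∂μ := by
  have hle : ∀ i, MeasurableSpace.comap (fun a => X a i) inferInstance ≤ ‹MeasurableSpace Ω› :=
    fun i => (hmeas i).comap_le
  have hind := indep_iSup_of_disjoint hle ((iIndepFun_iff_iIndep _ _ _).1 hindep)
    (disjoint_compl_right (a := (E : Set ι)))
  have hleE : ∀ T : Set ι,
      ⨆ i ∈ T, MeasurableSpace.comap (fun a => X a i) inferInstance ≤ ‹MeasurableSpace Ω› :=
    fun T => iSup₂_le fun i _ => hle i
  have hB := measurableSet_forall_le (X := X) E s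
  calc ∫⁻ a, {a | ∀ i ∈ E, X a i ≤ s}.indicator H a ∂μ
      = ∫⁻ a, {a | ∀ i ∈ E, X a i ≤ s}.indicator (fun _ => 1) a * H a ∂μ := by
        simp only [← Set.indicator_mul_left, one_mul]
    _ = (∫⁻ a, {a | ∀ i ∈ E, X a i ≤ s}.indicator (fun _ => 1) a ∂μ) * ∫⁻ a, H a ∂μ :=
        lintegral_mul_eq_lintegral_mul_lintegral_of_independent_measurableSpace (hleE _) (hleE _)
          hind (measurable_const.indicator hB) hH
    _ = μ {a | ∀ i ∈ E, X a i ≤ s} * ∫⁻ a, H a ∂μ := by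
        rw [lintegral_indicator_const (hleE _ _ hB), one_mul]

theorem lintegral_indicator_forall_le_eq_ofReal_div_pow_mul
    (hmeas : ∀ i, Measurable fun a => X a i)
    (hunif : ∀ i, Measure.map (fun a => X a i) μ = volume.restrict (Set.Icc (0 : ℝ) 1))
    (hindep : iIndepFun (fun i a => X a i) μ) (E : Finset ι) {q r : ℝ} (hqr : q ≤ r)
    (hr0 : 0 < r) (hr1 : r ≤ 1) {G : (ι → Prop) → ℝ≥0∞} (hG : Measurable G) :
    ∫⁻ a, {a | ∀ i ∈ E, X a i ≤ q}.indicator (fun a => G fun i => X a i ≤ r) a ∂μ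
      = ENNReal.ofReal (q / r) ^ #E *
        ∫⁻ a, {a | ∀ i ∈ E, X a i ≤ r}.indicator (fun a => G fun i => X a i ≤ r) a ∂μ := by
  have hfactor : ∀ s ≤ r, ∫⁻ a, {a | ∀ i ∈ E, X a i ≤ s}.indicator (fun a => G fun i => X a i ≤ r) a ∂μ
      = ENNReal.ofReal s ^ #E * ∫⁻ a, G (fun i => i ∈ E ∨ X a i ≤ r) ∂μ := by
    intro s hs
    -- On this event `X a i ≤ r` holds on `E` anyway, so `G` only sees the coordinates off `E`.
    rw [← measure_setOf_forall_le hmeas hunif hindep E (hs.trans hr1),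
      ← lintegral_indicator_forall_le hmeas hindep E s
        (H := fun a => G fun i => i ∈ E ∨ X a i ≤ r) (hG.comp (measurable_mem_or_le E r))]
    refine lintegral_congr fun a => congrFun (Set.indicator_congr fun a ha => ?_) a
    refine congrArg G (funext fun i => propext ⟨Or.inr, ?_⟩)
    rintro (hi | hi)
    exacts [(ha i hi).trans hs, hi]
  rw [hfactor q hqr, hfactor r le_rfl, ← mul_assoc, ← mul_pow, ← ENNReal.ofReal_mul' hr0.le,
    div_mul_cancel₀ q hr0.ne']

end Thinning

section Limsup

lemma rpow_one_div_le_mul_rpow {a b c : ℝ} {N : ℕ} (hN : N ≠ 0) (ha : 0 ≤ a) (hb : 0 ≤ b)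
    (hc : 0 ≤ c) (h : a ≤ c ^ N * b) : a ^ (1 / (N : ℝ)) ≤ c * b ^ (1 / (N : ℝ)) :=
  calc a ^ (1 / (N : ℝ)) ≤ (c ^ N * b) ^ (1 / (N : ℝ)) :=
        Real.rpow_le_rpow ha h (by positivity)
    _ = c * b ^ (1 / (N : ℝ)) := by
        rw [Real.mul_rpow (by positivity) hb, one_div, Real.pow_rpow_inv_natCast hc hN]

theorem limsup_rpow_le_mul_limsup {x y : ℕ → ℕ} {κ : ℝ} (hκ : 0 ≤ κ) (C : ℕ)
    (hy : ∀ N, y N ≤ C ^ N) (h : ∀ c, κ < c → ∀ᶠ N in atTop, (x N : ℝ) ≤ c ^ N * y N) :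
    limsup (fun N : ℕ => (x N : ℝ) ^ (1 / (N : ℝ))) atTop
      ≤ κ * limsup (fun N : ℕ => (y N : ℝ) ^ (1 / (N : ℝ))) atTop := by
  set f := fun N : ℕ => (x N : ℝ) ^ (1 / (N : ℝ))
  set g := fun N : ℕ => (y N : ℝ) ^ (1 / (N : ℝ))
  set L := limsup g atTop
  have hg : IsBoundedUnder (· ≤ ·) atTop g := by
    refine isBoundedUnder_of_eventually_le (a := (C : ℝ)) ?_
    filter_upwards [eventually_ne_atTop 0] with N hN
    have hyN : (y N : ℝ) ≤ (C : ℝ) ^ N * 1 := by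
      rw [mul_one]
      exact_mod_cast hy N
    have := rpow_one_div_le_mul_rpow hN (Nat.cast_nonneg _) zero_le_one (Nat.cast_nonneg C) hyN
    rwa [Real.one_rpow, mul_one] at this
  have hf : IsCoboundedUnder (· ≤ ·) atTop f :=
    (isBoundedUnder_of ⟨0, fun N => Real.rpow_nonneg (Nat.cast_nonneg _) _⟩ :
      IsBoundedUnder (· ≥ ·) atTop f).isCoboundedUnder_le
  have hε : ∀ ε ∈ Set.Ioi (0 : ℝ), limsup f atTop ≤ (κ + ε) * (L + ε) := by
    intro ε (hε : 0 < ε)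
    refine limsup_le_of_le hf ?_
    filter_upwards [h (κ + ε) (by linarith),
      eventually_lt_of_limsup_lt (lt_add_of_pos_right L hε) hg, eventually_ne_atTop 0]
      with N hxN hgN hN
    calc f N ≤ (κ + ε) * g N :=
          rpow_one_div_le_mul_rpow hN (Nat.cast_nonneg _) (Nat.cast_nonneg _) (by linarith) hxN
      _ ≤ (κ + ε) * (L + ε) := by gcongr
  have hlim : Tendsto (fun ε => (κ + ε) * (L + ε)) (𝓝[>] 0) (𝓝 (κ * L)) := by
    have hcont : Continuous fun ε : ℝ => (κ + ε) * (L + ε) := by fun_prop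
    simpa using (hcont.tendsto 0).mono_left nhdsWithin_le_nhds
  exact ge_of_tendsto hlim (eventually_nhdsWithin_of_forall hε)

end Limsup

namespace SAW

variable {d : ℕ}

section Paths

variable {N : ℕ}

def steps (d : ℕ) : Finset (V d) :=
  univ.image fun b : Bool × Fin d => if b.1 then unit d b.2 else -unit d b.2

lemma card_steps_le (d : ℕ) : #(steps d) ≤ 2 * d :=
  card_image_le.trans_eq (by simp [two_mul])

lemma Adj.sub_mem_steps {x y : V d} (h : Adj x y) : y - x ∈ steps d := by
  obtain ⟨i, rfl | rfl⟩ := h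
  · exact mem_image.2 ⟨(true, i), mem_univ _, by simp⟩
  · exact mem_image.2 ⟨(false, i), mem_univ _, by simp⟩

def increments {G : Type*} [Sub G] (S : Fin (N + 1) → G) (n : Fin N) : G :=
  S n.succ - S n.castSucc

lemma eq_of_increments_eq {G : Type*} [AddGroup G] {S T : Fin (N + 1) → G} (h0 : S 0 = T 0)
    (h : increments S = increments T) : S = T := by
  funext m
  induction m using Fin.induction with
  | zero => exact h0
  | succ n ih =>
    rw [← sub_add_cancel (S n.succ) (S n.castSucc), ← increments, h, increments, ih,
      sub_add_cancel]

lemma mapsTo_increments (x : V d) :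
    Set.MapsTo increments {S : Fin (N + 1) → V d | IsSAW S ∧ S 0 = x}
      ↑(Fintype.piFinset fun _ : Fin N => steps d) :=
  fun _ hS => Fintype.mem_piFinset.2 fun n => (hS.1.2 n).sub_mem_steps

lemma injOn_increments (x : V d) :
    Set.InjOn increments {S : Fin (N + 1) → V d | IsSAW S ∧ S 0 = x} :=
  fun _ hS _ hT h => eq_of_increments_eq (hS.2.trans hT.2.symm) h

lemma finite_setOf_isSAW (d N : ℕ) (x : V d) :
    {S : Fin (N + 1) → V d | IsSAW S ∧ S 0 = x}.Finite :=
  .of_injOn (mapsTo_increments x) (injOn_increments x) (finite_toSet _)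

noncomputable def sawFinset (d N : ℕ) (x : V d) : Finset (Fin (N + 1) → V d) :=
  (finite_setOf_isSAW d N x).toFinset

lemma mem_sawFinset {x : V d} {S : Fin (N + 1) → V d} :
    S ∈ sawFinset d N x ↔ IsSAW S ∧ S 0 = x :=
  Set.Finite.mem_toFinset _

lemma card_sawFinset_le (d N : ℕ) (x : V d) : #(sawFinset d N x) ≤ (2 * d) ^ N :=
  calc #(sawFinset d N x)
      ≤ #(Fintype.piFinset fun _ : Fin N => steps d) :=
        card_le_card_of_injOn increments (fun _ hS => mapsTo_increments x (mem_sawFinset.1 hS))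
          fun _ hS _ hT => injOn_increments x (mem_sawFinset.1 hS) (mem_sawFinset.1 hT)
    _ ≤ (2 * d) ^ N := by
        rw [Fintype.card_piFinset, prod_const, card_univ, Fintype.card_fin]
        exact Nat.pow_le_pow_left (card_steps_le d) N

lemma finite_setOf_usesEdge (S : Fin (N + 1) → V d) : {e | UsesEdge S e}.Finite :=
  ((Set.finite_range S).prod Set.finite_univ).subset fun e ⟨n, hn⟩ => by
    rcases hn with ⟨h, -⟩ | ⟨h, -⟩
    exacts [⟨⟨_, h⟩, trivial⟩, ⟨⟨_, h⟩, trivial⟩]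

noncomputable def edges (S : Fin (N + 1) → V d) : Finset (Edge d) :=
  (finite_setOf_usesEdge S).toFinset

lemma openPath_iff_forall_mem_edges {η : Edge d → Prop} {S : Fin (N + 1) → V d} :
    OpenPath η S ↔ ∀ e ∈ edges S, η e := by
  simp [OpenPath, edges]

lemma Adj.exists_edge {x y : V d} (h : Adj x y) :
    ∃ e : Edge d, (x = e.1 ∧ y = e.1 + unit d e.2) ∨ (y = e.1 ∧ x = e.1 + unit d e.2) := by
  obtain ⟨i, h | h⟩ := h
  exacts [⟨(x, i), .inl ⟨rfl, h⟩⟩, ⟨(y, i), .inr ⟨rfl, h⟩⟩]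

lemma IsSAW.le_card_edges {S : Fin (N + 1) → V d} (hS : IsSAW S) : N ≤ #(edges S) := by
  choose e he using fun n : Fin N => (hS.2 n).exists_edge
  have hmem : ∀ n, e n ∈ edges S := fun n => (finite_setOf_usesEdge S).mem_toFinset.2 ⟨n, he n⟩
  have hinj : Function.Injective e := by
    intro n m h
    have hn := he n
    rw [h] at hn
    have val := fun {i j : Fin (N + 1)} (h : S i = S j) => congrArg Fin.val (hS.1 h)
    rcases hn with ⟨h1, h2⟩ | ⟨h1, h2⟩ <;> rcases he m with ⟨h3, h4⟩ | ⟨h3, h4⟩ <;>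
      have := val (h1.trans h3.symm) <;> have := val (h2.trans h4.symm) <;>
      simp only [Fin.val_castSucc, Fin.val_succ] at * <;> omega
  simpa using card_le_card_of_injOn (s := univ) e (fun n _ => hmem n) hinj.injOn

open Classical in
lemma Z_eq_card_filter (η : Edge d → Prop) (N : ℕ) (x : V d) :
    Z η N x = #{S ∈ sawFinset d N x | OpenPath η S} := by
  rw [Z, ← Nat.card_eq_finsetCard]
  exact Nat.card_congr (Equiv.subtypeEquivRight fun S => by simp [mem_sawFinset, and_assoc])

lemma Z_le_pow (η : Edge d → Prop) (N : ℕ) (x : V d) : Z η N x ≤ (2 * d) ^ N := by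
  classical
  exact (Z_eq_card_filter η N x).trans_le ((card_filter_le _ _).trans (card_sawFinset_le d N x))

lemma Z_mono {η η' : Edge d → Prop} (h : ∀ e, η e → η' e) (N : ℕ) (x : V d) :
    Z η N x ≤ Z η' N x := by
  classical
  simp only [Z_eq_card_filter]
  exact card_le_card (monotone_filter_right _ fun _ _ hS e he => h e (hS e he))

lemma measurable_Z (N : ℕ) (x : V d) : Measurable fun η : Edge d → Prop => Z η N x := by
  classical
  simp only [Z_eq_card_filter, card_filter]
  refine Finset.measurable_sum _ fun S _ => Measurable.ite ?_ measurable_const measurable_const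
  simp only [openPath_iff_forall_mem_edges, ← Set.iInter_ofPred]
  exact (edges S).measurableSet_biInter fun e _ =>
    measurableSet_setOfPred.2 (measurable_pi_apply e)

end Paths

section Percolation

variable {Ω : Type*} [MeasurableSpace Ω] {μ : Measure Ω} {X : Ω → Edge d → ℝ}

lemma measurable_threshold (hmeas : ∀ e, Measurable fun a => X a e) (q : ℝ) :
    Measurable fun a e => X a e ≤ q :=
  measurable_pi_iff.2 fun e =>
    measurableSet_setOfPred.1 (measurableSet_le (hmeas e) measurable_const)

lemma lintegral_Z_mul_eq_sum (hmeas : ∀ e, Measurable fun a => X a e)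
    {G : (Edge d → Prop) → ℝ≥0∞} (hG : Measurable G) (q r : ℝ) (N : ℕ) (x : V d) :
    ∫⁻ a, Z (fun e => X a e ≤ q) N x * G (fun e => X a e ≤ r) ∂μ
      = ∑ S ∈ sawFinset d N x,
          ∫⁻ a, {a | ∀ e ∈ edges S, X a e ≤ q}.indicator (fun a => G fun e => X a e ≤ r) a ∂μ := by
  classical
  have hGr : Measurable fun a => G fun e => X a e ≤ r := hG.comp (measurable_threshold hmeas r)
  have hB : ∀ S : Fin (N + 1) → V d, MeasurableSet {a | ∀ e ∈ edges S, X a e ≤ q} := fun S => by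
    simp only [← Set.iInter_ofPred]
    exact (edges S).measurableSet_biInter fun e _ => measurableSet_le (hmeas e) measurable_const
  rw [← lintegral_finsetSum _ fun S _ => hGr.indicator (hB S)]
  refine lintegral_congr fun a => ?_
  simp only [Z_eq_card_filter, card_filter, Nat.cast_sum, sum_mul, Set.indicator_apply,
    Set.mem_ofPred_eq, openPath_iff_forall_mem_edges, Nat.cast_ite, Nat.cast_one, Nat.cast_zero,
    ite_mul, one_mul, zero_mul]

lemma lintegral_Z_mul_inv_Z_le [IsProbabilityMeasure μ] (hmeas : ∀ e, Measurable fun a => X a e)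
    (hunif : ∀ e, Measure.map (fun a => X a e) μ = volume.restrict (Set.Icc (0 : ℝ) 1))
    (hindep : iIndepFun (fun e a => X a e) μ) {q r : ℝ} (hqr : q ≤ r) (hr0 : 0 < r)
    (hr1 : r ≤ 1) (N : ℕ) (x : V d) :
    ∫⁻ a, Z (fun e => X a e ≤ q) N x * (Z (fun e => X a e ≤ r) N x : ℝ≥0∞)⁻¹ ∂μ
      ≤ ENNReal.ofReal (q / r) ^ N := by
  have hG : Measurable fun η : Edge d → Prop => (Z η N x : ℝ≥0∞)⁻¹ :=
    (measurable_from_top.comp (measurable_Z N x)).inv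
  have hρ : ENNReal.ofReal (q / r) ≤ 1 := ENNReal.ofReal_le_one.2 ((div_le_one hr0).2 hqr)
  calc _ = ∑ S ∈ sawFinset d N x, ∫⁻ a, {a | ∀ e ∈ edges S, X a e ≤ q}.indicator
          (fun a => (Z (fun e => X a e ≤ r) N x : ℝ≥0∞)⁻¹) a ∂μ :=
        lintegral_Z_mul_eq_sum hmeas hG q r N x
    _ = ∑ S ∈ sawFinset d N x, ENNReal.ofReal (q / r) ^ #(edges S) *
          ∫⁻ a, {a | ∀ e ∈ edges S, X a e ≤ r}.indicator
            (fun a => (Z (fun e => X a e ≤ r) N x : ℝ≥0∞)⁻¹) a ∂μ :=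
        sum_congr rfl fun S _ => lintegral_indicator_forall_le_eq_ofReal_div_pow_mul hmeas hunif
          hindep (edges S) hqr hr0 hr1 hG
    _ ≤ ∑ S ∈ sawFinset d N x, ENNReal.ofReal (q / r) ^ N *
          ∫⁻ a, {a | ∀ e ∈ edges S, X a e ≤ r}.indicator
            (fun a => (Z (fun e => X a e ≤ r) N x : ℝ≥0∞)⁻¹) a ∂μ :=
        sum_le_sum fun S hS => mul_le_mul_left
          (pow_le_pow_right_of_le_one' hρ (mem_sawFinset.1 hS).1.le_card_edges) _
    _ = ENNReal.ofReal (q / r) ^ N *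
          ∫⁻ a, Z (fun e => X a e ≤ r) N x * (Z (fun e => X a e ≤ r) N x : ℝ≥0∞)⁻¹ ∂μ := by
        rw [← mul_sum, lintegral_Z_mul_eq_sum hmeas hG r r N x]
    _ ≤ ENNReal.ofReal (q / r) ^ N * ∫⁻ _, 1 ∂μ := by
        gcongr with a
        exact ENNReal.mul_inv_le_one _
    _ = ENNReal.ofReal (q / r) ^ N := by rw [lintegral_one, measure_univ, mul_one]

lemma measure_pow_mul_Z_lt_Z_le [IsProbabilityMeasure μ] (hmeas : ∀ e, Measurable fun a => X a e)
    (hunif : ∀ e, Measure.map (fun a => X a e) μ = volume.restrict (Set.Icc (0 : ℝ) 1))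
    (hindep : iIndepFun (fun e a => X a e) μ) {q r c : ℝ} (hqr : q ≤ r) (hr0 : 0 < r)
    (hr1 : r ≤ 1) (hc : 0 < c) (N : ℕ) (x : V d) :
    μ {a | c ^ N * (Z (fun e => X a e ≤ r) N x : ℝ) < Z (fun e => X a e ≤ q) N x}
      ≤ ENNReal.ofReal (q / r / c) ^ N := by
  set ratio := fun a => (Z (fun e => X a e ≤ q) N x : ℝ≥0∞) * (Z (fun e => X a e ≤ r) N x : ℝ≥0∞)⁻¹
  have hratio : Measurable ratio :=
    (measurable_from_top.comp ((measurable_Z N x).comp (measurable_threshold hmeas q))).mul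
      (measurable_from_top.comp ((measurable_Z N x).comp (measurable_threshold hmeas r))).inv
  have hsub : {a | c ^ N * (Z (fun e => X a e ≤ r) N x : ℝ) < Z (fun e => X a e ≤ q) N x}
      ⊆ {a | ENNReal.ofReal (c ^ N) ≤ ratio a} := by
    intro a ha
    simp only [Set.mem_ofPred_eq] at ha ⊢
    have hZr : Z (fun e => X a e ≤ r) N x ≠ 0 := by
      intro h0
      have := Z_mono (fun e (he : X a e ≤ q) => he.trans hqr) N x
      rw [h0, Nat.le_zero] at this
      simp [this, h0] at ha
    show _ ≤ (Z (fun e => X a e ≤ q) N x : ℝ≥0∞) / Z (fun e => X a e ≤ r) N x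
    rw [ENNReal.le_div_iff_mul_le (.inl (by simpa using hZr)) (.inl (by simp)),
      ← ENNReal.ofReal_natCast, ← ENNReal.ofReal_natCast, ← ENNReal.ofReal_mul (by positivity)]
    exact ENNReal.ofReal_le_ofReal ha.le
  calc _ ≤ μ {a | ENNReal.ofReal (c ^ N) ≤ ratio a} := measure_mono hsub
    _ ≤ (∫⁻ a, ratio a ∂μ) / ENNReal.ofReal (c ^ N) :=
        meas_ge_le_lintegral_div hratio.aemeasurable (ENNReal.ofReal_pos.2 (pow_pos hc N)).ne'
          ENNReal.ofReal_ne_top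
    _ ≤ ENNReal.ofReal (q / r) ^ N / ENNReal.ofReal c ^ N := by
        rw [ENNReal.ofReal_pow hc.le]
        exact ENNReal.div_le_div_right
          (lintegral_Z_mul_inv_Z_le hmeas hunif hindep hqr hr0 hr1 N x) _
    _ = ENNReal.ofReal (q / r / c) ^ N := by
        rw [div_eq_mul_inv, ENNReal.inv_pow, ← mul_pow, ← div_eq_mul_inv,
          ← ENNReal.ofReal_div_of_pos hc]

lemma ae_eventually_Z_le_pow_mul [IsProbabilityMeasure μ]
    (hmeas : ∀ e, Measurable fun a => X a e)
    (hunif : ∀ e, Measure.map (fun a => X a e) μ = volume.restrict (Set.Icc (0 : ℝ) 1))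
    (hindep : iIndepFun (fun e a => X a e) μ) {q r c : ℝ} (hq : 0 ≤ q) (hqr : q ≤ r)
    (hr0 : 0 < r) (hr1 : r ≤ 1) (hc : q / r < c) (x : V d) :
    ∀ᵐ a ∂μ, ∀ᶠ N in atTop,
      (Z (fun e => X a e ≤ q) N x : ℝ) ≤ c ^ N * Z (fun e => X a e ≤ r) N x := by
  have hc0 : 0 < c := (div_nonneg hq hr0.le).trans_lt hc
  have hρ : ENNReal.ofReal (q / r / c) < 1 := ENNReal.ofReal_lt_one.2 ((div_lt_one hc0).2 hc)
  have hsum : ∑' N, μ {a | c ^ N * (Z (fun e => X a e ≤ r) N x : ℝ) < Z (fun e => X a e ≤ q) N x}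
      ≠ ⊤ := by
    refine ne_top_of_le_ne_top ?_ (ENNReal.tsum_le_tsum fun N =>
      measure_pow_mul_Z_lt_Z_le hmeas hunif hindep hqr hr0 hr1 hc0 N x)
    rw [ENNReal.tsum_geometric]
    exact ENNReal.inv_ne_top.2 (tsub_pos_of_lt hρ).ne'
  filter_upwards [ae_eventually_notMem hsum] with a ha
  filter_upwards [ha] with N hN using not_lt.1 hN

end Percolation

theorem statement_5_general (d : ℕ)
    {Ω : Type*} [MeasurableSpace Ω] (μ : Measure Ω) [IsProbabilityMeasure μ]
    (X : Ω → Edge d → ℝ) (hmeas : ∀ e, Measurable fun a => X a e)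
    (hunif : ∀ e : Edge d,
      Measure.map (fun a => X a e) μ = volume.restrict (Set.Icc (0 : ℝ) 1))
    (hindep : iIndepFun (fun e a => X a e) μ)
    (p p' : ℝ) (hp : 0 < p) (hpp' : p ≤ p') (hp' : p' < 1) :
    ∀ᵐ a ∂μ,
      limsup (fun N : ℕ => (Z (fun e => X a e ≤ p) N 0 : ℝ) ^ (1 / (N : ℝ))) atTop / p
        ≤ limsup (fun N : ℕ => (Z (fun e => X a e ≤ p') N 0 : ℝ) ^ (1 / (N : ℝ))) atTop / p' := by
  have hp'0 : 0 < p' := hp.trans_le hpp'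
  have hae : ∀ᵐ a ∂μ, ∀ t : ℚ, p / p' < t → ∀ᶠ N in atTop,
      (Z (fun e => X a e ≤ p) N 0 : ℝ) ≤ (t : ℝ) ^ N * Z (fun e => X a e ≤ p') N 0 := by
    refine ae_all_iff.2 fun t => ?_
    by_cases ht : p / p' < t
    · filter_upwards [ae_eventually_Z_le_pow_mul hmeas hunif hindep hp.le hpp' hp'0 hp'.le ht 0]
        with a ha _ using ha
    · exact ae_of_all _ fun a h => absurd h ht
  filter_upwards [hae] with a ha
  have hlimsup := limsup_rpow_le_mul_limsup (by positivity : 0 ≤ p / p') (2 * d)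
    (Z_le_pow _ · 0) fun c hc => by
      obtain ⟨t, hpt, htc⟩ := exists_rat_btwn hc
      filter_upwards [ha t hpt] with N hN
      exact hN.trans (by gcongr; exact (div_nonneg hp.le hp'0.le).trans hpt.le)
  calc _ ≤ p / p' * limsup (fun N : ℕ => (Z (fun e => X a e ≤ p') N 0 : ℝ) ^ (1 / (N : ℝ))) atTop
          / p := by gcongr
    _ = _ := by field_simp

/-- under the standard monotone coupling of bond percolation on `ℤ^d`
(`d ≥ 2`) with parameters `0 < p ≤ p' < 1`, almost surely
`limsup_N Z_N(ω_p)^{1/N} / p ≤ limsup_N Z_N(ω_{p'})^{1/N} / p'`. -/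
theorem statement_5 (d : ℕ) (hd : 2 ≤ d)
    {Ω : Type*} [MeasurableSpace Ω] (μ : Measure Ω) [IsProbabilityMeasure μ]
    (X : Ω → Edge d → ℝ) (hmeas : ∀ e, Measurable fun a => X a e)
    (hunif : ∀ e : Edge d,
      Measure.map (fun a => X a e) μ = volume.restrict (Set.Icc (0 : ℝ) 1))
    (hindep : iIndepFun (fun e a => X a e) μ)
    (p p' : ℝ) (hp : 0 < p) (hpp' : p ≤ p') (hp' : p' < 1) :
    ∀ᵐ a ∂μ,
      limsup (fun N : ℕ => (Z (fun e => X a e ≤ p) N 0 : ℝ) ^ (1 / (N : ℝ))) atTop / p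
        ≤ limsup (fun N : ℕ => (Z (fun e => X a e ≤ p') N 0 : ℝ) ^ (1 / (N : ℝ))) atTop / p' :=
  statement_5_general d μ X hmeas hunif hindep p p' hp hpp' hp'

end SAW
end

section
/- Let d ≥ 2, 0 < p < p' < 1, and consider the standard monotone coupling of bond percolation with parameters p and p'. Let 𝓕_{p'} := σ(ω_{p'}(e) : e an edge of ℤ^d). Then for every N, almost surely 𝔼[Z_N(ω_p) | 𝓕_{p'}] = (p/p')^N · Z_N(ω_{p'}). -/
open MeasureTheory ProbabilityTheory Filter

namespace SAW

/-!
Under the monotone coupling, the `p`-open edges are obtained from the `p'`-open ones by keeping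
each independently with probability `p / p'`. Concretely, let `E` be a finite set of edges and
`t` an event of `σ(ω_{p'})`. On the event that all edges of `E` are `p'`-open, `t` coincides
with an event `t'` that depends only on the edges outside `E`; hence, for `q ≤ p'`, independence
gives `P(t ∩ {E is q-open}) = P(t') q^|E|`, and comparing `q = p` with `q = p'` shows
`E[1{E is p-open} | σ(ω_{p'})] = (p / p')^|E| 1{E is p'-open}`.
A self-avoiding path of length `N` has exactly `N` distinct edges and `Z_N` is a finite sum of
the indicators that such paths are open, so linearity of conditional expectation concludes.
-/

section Coupling

variable {ι Ω : Type*} {X : Ω → ι → ℝ}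

def allLe (X : Ω → ι → ℝ) (q : ℝ) (E : Finset ι) : Set Ω :=
  ⋂ e ∈ E, (fun a => X a e) ⁻¹' Set.Iic q

noncomputable abbrev percSigma (X : Ω → ι → ℝ) (q : ℝ) : MeasurableSpace Ω :=
  MeasurableSpace.comap (fun a e => if X a e ≤ q then (1 : ℝ) else 0) MeasurableSpace.pi

lemma mem_allLe {q : ℝ} {E : Finset ι} {a : Ω} : a ∈ allLe X q E ↔ ∀ e ∈ E, X a e ≤ q := by
  simp [allLe]

lemma measurableSet_percSigma_allLe (q : ℝ) (E : Finset ι) :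
    MeasurableSet[percSigma X q] (allLe X q E) := by
  refine ⟨{y | ∀ e ∈ E, y e = 1}, ?_, ?_⟩
  · simp only [Set.ofPred_forall]
    exact E.measurableSet_biInter fun e _ => measurable_pi_apply e (measurableSet_singleton 1)
  · ext a
    simp [allLe]

noncomputable abbrev sigmaOn (X : Ω → ι → ℝ) (s : Set ι) : MeasurableSpace Ω :=
  ⨆ e ∈ s, MeasurableSpace.comap (fun a => X a e) inferInstance

lemma comap_le_sigmaOn {s : Set ι} {e : ι} (he : e ∈ s) :
    MeasurableSpace.comap (fun a => X a e) inferInstance ≤ sigmaOn X s :=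
  le_iSup₂ (f := fun e (_ : e ∈ s) => MeasurableSpace.comap (fun a => X a e) inferInstance) e he

lemma measurableSet_sigmaOn_allLe (q : ℝ) (E : Finset ι) :
    MeasurableSet[sigmaOn X E] (allLe X q E) :=
  E.measurableSet_biInter fun _ he => comap_le_sigmaOn he _ ⟨Set.Iic q, measurableSet_Iic, rfl⟩

lemma exists_sigmaOn_compl_inter_allLe_eq {p' : ℝ} {t : Set Ω}
    (ht : MeasurableSet[percSigma X p'] t) (E : Finset ι) :
    ∃ t', MeasurableSet[sigmaOn X (↑E)ᶜ] t' ∧ ∀ q ≤ p', t ∩ allLe X q E = t' ∩ allLe X q E := by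
  classical
  obtain ⟨S, hS, rfl⟩ := ht
  -- `Y'` is the `p'`-configuration with the edges of `E` forced open: it ignores `E`, and it
  -- agrees with the `p'`-configuration wherever all edges of `E` are `p'`-open.
  set Y' : Ω → ι → ℝ := fun a e => if e ∈ E then 1 else if X a e ≤ p' then 1 else 0
  have hY' : Measurable[sigmaOn X (↑E)ᶜ] Y' := by
    refine (@measurable_pi_iff Ω ι _ (sigmaOn X (↑E)ᶜ) _ Y').mpr fun e => ?_
    by_cases he : e ∈ E
    · simp only [Y', if_pos he]
      exact measurable_const
    · simp only [Y', if_neg he]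
      exact ((measurable_const.ite measurableSet_Iic measurable_const).comp
        (comap_measurable _)).mono (comap_le_sigmaOn he) le_rfl
  refine ⟨Y' ⁻¹' S, hY' hS, fun q hq => ?_⟩
  ext a
  simp only [Set.mem_inter_iff, Set.mem_preimage, and_congr_left_iff]
  intro ha
  have hopen : ∀ e ∈ E, X a e ≤ p' := fun e he =>
    (Set.mem_iInter₂.mp ha e he : X a e ≤ q).trans hq
  suffices (fun e => if X a e ≤ p' then (1 : ℝ) else 0) = Y' a by rw [this]
  funext e
  by_cases he : e ∈ E
  · simp [Y', he, hopen e he]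
  · simp [Y', he]

variable [MeasurableSpace Ω] {μ : Measure Ω}

lemma measurableSet_allLe (hmeas : ∀ e, Measurable fun a => X a e) (q : ℝ) (E : Finset ι) :
    MeasurableSet (allLe X q E) :=
  E.measurableSet_biInter fun e _ => hmeas e measurableSet_Iic

lemma percSigma_le (hmeas : ∀ e, Measurable fun a => X a e) (q : ℝ) :
    percSigma X q ≤ ‹MeasurableSpace Ω› :=
  (measurable_pi_lambda _ fun e =>
    Measurable.ite (measurableSet_le (hmeas e) measurable_const) measurable_const
      measurable_const).comap_le

lemma integrable_indicator_allLe [IsFiniteMeasure μ] (hmeas : ∀ e, Measurable fun a => X a e)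
    (q : ℝ) (E : Finset ι) : Integrable ((allLe X q E).indicator (1 : Ω → ℝ)) μ :=
  (integrable_const 1).indicator (measurableSet_allLe hmeas q E)

lemma measureReal_allLe (hmeas : ∀ e, Measurable fun a => X a e)
    (hunif : ∀ e, Measure.map (fun a => X a e) μ = volume.restrict (Set.Icc (0 : ℝ) 1))
    (hindep : iIndepFun (fun e a => X a e) μ) {q : ℝ} (hq₀ : 0 ≤ q) (hq₁ : q ≤ 1)
    (E : Finset ι) : μ.real (allLe X q E) = q ^ E.card := by
  have hIcc : Set.Iic q ∩ Set.Icc 0 1 = Set.Icc 0 q := by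
    ext x
    simp only [Set.mem_inter_iff, Set.mem_Iic, Set.mem_Icc]
    exact ⟨fun h => ⟨h.2.1, h.1⟩, fun h => ⟨h.2, h.1, h.2.trans hq₁⟩⟩
  have hedge : ∀ e, μ ((fun a => X a e) ⁻¹' Set.Iic q) = ENNReal.ofReal q := fun e => by
    rw [← Measure.map_apply (hmeas e) measurableSet_Iic, hunif e,
      Measure.restrict_apply measurableSet_Iic, hIcc, Real.volume_Icc, sub_zero]
  rw [measureReal_def, allLe, hindep.meas_biInter fun e _ => ⟨_, measurableSet_Iic, rfl⟩,
    Finset.prod_congr rfl fun e _ => hedge e, Finset.prod_const, ENNReal.toReal_pow,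
    ENNReal.toReal_ofReal hq₀]

lemma measureReal_inter_allLe (hmeas : ∀ e, Measurable fun a => X a e)
    (hunif : ∀ e, Measure.map (fun a => X a e) μ = volume.restrict (Set.Icc (0 : ℝ) 1))
    (hindep : iIndepFun (fun e a => X a e) μ) {p p' : ℝ} (hp : 0 ≤ p) (hpp' : p ≤ p')
    (hp' : p' ≤ 1) {t : Set Ω} (ht : MeasurableSet[percSigma X p'] t) (E : Finset ι) :
    μ.real (t ∩ allLe X p E) = (p / p') ^ E.card * μ.real (t ∩ allLe X p' E) := by
  obtain ⟨t', ht', ht⟩ := exists_sigmaOn_compl_inter_allLe_eq ht E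
  have hindep' : Indep (sigmaOn X (↑E)ᶜ) (sigmaOn X E) μ :=
    indep_iSup_of_disjoint (fun e => (hmeas e).comap_le) hindep.iIndep disjoint_compl_left
  have hfactor : ∀ q, 0 ≤ q → q ≤ p' → μ.real (t ∩ allLe X q E) = μ.real t' * q ^ E.card := by
    intro q hq₀ hq
    rw [ht q hq, measureReal_def, (Indep_iff _ _ μ).mp hindep' _ _ ht'
        (measurableSet_sigmaOn_allLe q E), ENNReal.toReal_mul, ← measureReal_def,
      ← measureReal_def, measureReal_allLe hmeas hunif hindep hq₀ (hq.trans hp')]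
  rw [hfactor p hp hpp', hfactor p' (hp.trans hpp') le_rfl, mul_left_comm, ← mul_pow,
    div_mul_cancel_of_imp fun h => le_antisymm (h ▸ hpp') hp]

lemma condExp_indicator_allLe [IsFiniteMeasure μ] (hmeas : ∀ e, Measurable fun a => X a e)
    (hunif : ∀ e, Measure.map (fun a => X a e) μ = volume.restrict (Set.Icc (0 : ℝ) 1))
    (hindep : iIndepFun (fun e a => X a e) μ) {p p' : ℝ} (hp : 0 ≤ p) (hpp' : p ≤ p')
    (hp' : p' ≤ 1) (E : Finset ι) :
    μ[(allLe X p E).indicator 1 | percSigma X p']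
      =ᵐ[μ] fun a => (p / p') ^ E.card * (allLe X p' E).indicator 1 a := by
  have hint := fun q => integrable_indicator_allLe (μ := μ) hmeas q E
  refine (ae_eq_condExp_of_forall_setIntegral_eq (percSigma_le hmeas p') (hint p)
    (fun s _ _ => ((hint p').const_mul _).integrableOn) (fun s hs _ => ?_) ?_).symm
  · rw [integral_const_mul, integral_indicator_one (measurableSet_allLe hmeas _ E),
      integral_indicator_one (measurableSet_allLe hmeas _ E),
      measureReal_restrict_apply (measurableSet_allLe hmeas _ E),
      measureReal_restrict_apply (measurableSet_allLe hmeas _ E),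
      Set.inter_comm, Set.inter_comm (allLe X p E),
      measureReal_inter_allLe hmeas hunif hindep hp hpp' hp' hs E]
  · exact ((stronglyMeasurable_one.indicator (measurableSet_percSigma_allLe p' E)).const_mul
      _).aestronglyMeasurable

end Coupling

section Paths

variable {d N : ℕ}

lemma unit_injective : Function.Injective (unit d) := by
  intro i j h
  by_contra hij
  simpa [unit, hij] using congrFun h i

lemma unit_add_unit_ne_zero (i j : Fin d) : unit d i + unit d j ≠ 0 := by
  intro h
  have hi := congrFun h i
  by_cases hij : i = j <;> simp [unit, hij] at hi

def edgeEnds (e : Edge d) : Sym2 (V d) := s(e.1, e.1 + unit d e.2)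

lemma edgeEnds_injective : Function.Injective (edgeEnds (d := d)) := by
  intro e f h
  rcases Sym2.eq_iff.mp h with ⟨h₁, h₂⟩ | ⟨h₁, h₂⟩
  · rw [h₁] at h₂
    exact Prod.ext h₁ (unit_injective (add_left_cancel h₂))
  · refine absurd (add_left_cancel (a := f.1) ?_) (unit_add_unit_ne_zero f.2 e.2)
    rw [← add_assoc, ← h₁, h₂, add_zero]

lemma exists_edgeEnds_of_adj {x y : V d} (h : Adj x y) : ∃ e, edgeEnds e = s(x, y) := by
  obtain ⟨i, rfl | rfl⟩ := h
  · exact ⟨(x, i), rfl⟩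
  · exact ⟨(y, i), Sym2.eq_swap⟩

lemma usesEdge_iff {S : Fin (N + 1) → V d} {e : Edge d} :
    UsesEdge S e ↔ ∃ n : Fin N, edgeEnds e = s(S n.castSucc, S n.succ) := by
  refine exists_congr fun n => ?_
  rw [edgeEnds, Sym2.eq_iff]
  constructor <;> rintro (⟨h₁, h₂⟩ | ⟨h₁, h₂⟩)
  exacts [.inl ⟨h₁.symm, h₂.symm⟩, .inr ⟨h₁.symm, h₂.symm⟩,
    .inl ⟨h₁.symm, h₂.symm⟩, .inr ⟨h₁.symm, h₂.symm⟩]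

noncomputable def pathEdges (S : Fin (N + 1) → V d) : Finset (Edge d) :=
  (Finset.univ.image fun n : Fin N => s(S n.castSucc, S n.succ)).preimage edgeEnds
    edgeEnds_injective.injOn

lemma openPath_iff_forall_mem_pathEdges {η : Edge d → Prop} {S : Fin (N + 1) → V d} :
    OpenPath η S ↔ ∀ e ∈ pathEdges S, η e := by
  simp [OpenPath, pathEdges, usesEdge_iff, eq_comm]

lemma IsSAW.card_pathEdges {S : Fin (N + 1) → V d} (hS : IsSAW S) :
    (pathEdges S).card = N := by
  classical
  have hinj : Function.Injective fun n : Fin N => s(S n.castSucc, S n.succ) := by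
    intro n m h
    rcases Sym2.eq_iff.mp h with ⟨h₁, -⟩ | ⟨h₁, h₂⟩
    · exact Fin.castSucc_injective _ (hS.1 h₁)
    · have h₁ := congrArg Fin.val (hS.1 h₁)
      have h₂ := congrArg Fin.val (hS.1 h₂)
      simp only [Fin.val_castSucc, Fin.val_succ] at h₁ h₂
      omega
  rw [pathEdges, Finset.card_preimage, Finset.filter_true_of_mem,
    Finset.card_image_of_injective _ hinj, Finset.card_univ, Fintype.card_fin]
  simp only [Finset.mem_image, Finset.mem_univ, true_and]
  rintro _ ⟨n, rfl⟩
  exact exists_edgeEnds_of_adj (hS.2 n)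

lemma Adj.abs_sub_le {x y : V d} (h : Adj x y) (j : Fin d) : |y j - x j| ≤ 1 := by
  obtain ⟨i, rfl | rfl⟩ := h <;> by_cases hij : j = i <;> simp [unit, hij]

lemma IsSAW.abs_apply_le {S : Fin (N + 1) → V d} (hS : IsSAW S) (h₀ : S 0 = 0) (j : Fin d)
    (n : Fin (N + 1)) : |S n j| ≤ n := by
  induction n using Fin.induction with
  | zero => simp [h₀]
  | succ n ih =>
    have hstep := (hS.2 n).abs_sub_le j
    have htri := abs_sub_abs_le_abs_sub (S n.succ j) (S n.castSucc j)
    simp only [Fin.val_castSucc] at ih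
    push_cast [Fin.val_succ]
    linarith

lemma finite_setOf_isSAW_and_eq_zero (d N : ℕ) :
    {S : Fin (N + 1) → V d | IsSAW S ∧ S 0 = 0}.Finite := by
  refine (Set.Finite.pi fun _ => Set.finite_Icc (fun _ : Fin d => -(N : ℤ)) fun _ => N).subset ?_
  rintro S ⟨hS, h₀⟩ n -
  have hbound : ∀ j, |S n j| ≤ N := fun j =>
    (hS.abs_apply_le h₀ j n).trans (by exact_mod_cast n.is_le)
  exact ⟨fun j => (abs_le.mp (hbound j)).1, fun j => (abs_le.mp (hbound j)).2⟩

noncomputable def saws (d N : ℕ) : Finset (Fin (N + 1) → V d) :=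
  (finite_setOf_isSAW_and_eq_zero d N).toFinset

lemma Z_eq_card_filter_s8 (η : Edge d → Prop) [DecidablePred (OpenPath (N := N) η)] :
    Z η N 0 = ((saws d N).filter (OpenPath η)).card := by
  rw [Z, ← Nat.card_eq_finsetCard]
  exact Nat.card_congr (Equiv.subtypeEquivRight fun S => by simp [saws, and_assoc])

lemma cast_Z_eq_sum_indicator {Ω : Type*} (X : Ω → Edge d → ℝ) (q : ℝ) (a : Ω) :
    (Z (fun e => X a e ≤ q) N 0 : ℝ)
      = ∑ S ∈ saws d N, (allLe X q (pathEdges S)).indicator 1 a := by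
  classical
  rw [Z_eq_card_filter_s8, Finset.natCast_card_filter]
  refine Finset.sum_congr rfl fun S _ => ?_
  simp only [Set.indicator_apply, mem_allLe, openPath_iff_forall_mem_pathEdges, Pi.one_apply]

end Paths

theorem statement_8_general (d : ℕ)
    {Ω : Type*} [MeasurableSpace Ω] (μ : Measure Ω) [IsProbabilityMeasure μ]
    (X : Ω → Edge d → ℝ) (hmeas : ∀ e, Measurable fun a => X a e)
    (hunif : ∀ e : Edge d,
      Measure.map (fun a => X a e) μ = volume.restrict (Set.Icc (0 : ℝ) 1))
    (hindep : iIndepFun (fun e a => X a e) μ)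
    (p p' : ℝ) (hp : 0 < p) (hpp' : p < p') (hp' : p' < 1) (N : ℕ) :
    μ[(fun a => (Z (fun e => X a e ≤ p) N 0 : ℝ)) |
        MeasurableSpace.comap
          (fun a (e : Edge d) => (if X a e ≤ p' then (1 : ℝ) else 0)) inferInstance]
      =ᵐ[μ] fun a => (p / p') ^ N * (Z (fun e => X a e ≤ p') N 0 : ℝ) := by
  have hZ : (fun a => (Z (fun e => X a e ≤ p) N 0 : ℝ))
      = ∑ S ∈ saws d N, (allLe X p (pathEdges S)).indicator 1 :=
    funext fun a => by rw [Finset.sum_apply, cast_Z_eq_sum_indicator]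
  have hpath : ∀ S ∈ saws d N, μ[(allLe X p (pathEdges S)).indicator 1 | percSigma X p']
      =ᵐ[μ] fun a => (p / p') ^ N * (allLe X p' (pathEdges S)).indicator 1 a := fun S hS => by
    have h := condExp_indicator_allLe hmeas hunif hindep hp.le hpp'.le hp'.le (pathEdges S)
    rwa [((Set.Finite.mem_toFinset _).mp hS).1.card_pathEdges] at h
  rw [hZ]
  refine (condExp_finsetSum (fun S _ => integrable_indicator_allLe hmeas p _) _).trans ?_
  filter_upwards [(eventually_all_finset _).2 hpath] with a ha
  rw [cast_Z_eq_sum_indicator, Finset.sum_apply, Finset.mul_sum]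
  exact Finset.sum_congr rfl ha

/-- under the standard monotone coupling of bond percolation on `ℤ^d`
(`d ≥ 2`, `0 < p < p' < 1`), with `𝓕_{p'}` the σ-algebra generated by `ω_{p'}`, for every `N`
almost surely `𝔼[Z_N(ω_p) | 𝓕_{p'}] = (p/p')^N · Z_N(ω_{p'})`. -/
theorem statement_8 (d : ℕ) (hd : 2 ≤ d)
    {Ω : Type*} [MeasurableSpace Ω] (μ : Measure Ω) [IsProbabilityMeasure μ]
    (X : Ω → Edge d → ℝ) (hmeas : ∀ e, Measurable fun a => X a e)
    (hunif : ∀ e : Edge d,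
      Measure.map (fun a => X a e) μ = volume.restrict (Set.Icc (0 : ℝ) 1))
    (hindep : iIndepFun (fun e a => X a e) μ)
    (p p' : ℝ) (hp : 0 < p) (hpp' : p < p') (hp' : p' < 1) (N : ℕ) :
    μ[(fun a => (Z (fun e => X a e ≤ p) N 0 : ℝ)) |
        MeasurableSpace.comap
          (fun a (e : Edge d) => (if X a e ≤ p' then (1 : ℝ) else 0)) inferInstance]
      =ᵐ[μ] fun a => (p / p') ^ N * (Z (fun e => X a e ≤ p') N 0 : ℝ) :=
  statement_8_general d μ X hmeas hunif hindep p p' hp hpp' hp' N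

end SAW
end
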